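/- Let Ω ⊆ ℂ be a domain whose complement contains at least two points and with nonempty boundary. Suppose there exist constants M > 1 and δ₀ ∈ (0,1) such that for every z ∈ Ω with δ_Ω(z) < δ₀ one has ρ_Ω(z) ≥ M / (δ_Ω(z)·log(1/δ_Ω(z))), i.e. every holomorphic f : 𝔻 → Ω with f(0) = z satisfies 2/|f′(0)| ≥ M/(δ_Ω(z)·log(1/δ_Ω(z))). Then there exists α > 1 such that ∂Ω satisfies condition (U)_{1,α}. -/

import Mathlib

/-!
If the annulus `r^α ≤ |z - a| ≤ r` around a boundary point `a` misses `∂Ω`, connectedness of `Ω`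
forces it into `Ω`. Writing `log s = m - W/2`, `log r = m + W/2`, the map
`F w = a + exp (m - i (W/π) log G(w))`, where `G` maps the disc onto the right half-plane with
`G 0 = e^{iu}`, sends the disc into the open annulus, with `t = |F 0 - a| = exp (m + W u/π)` and
`|F' 0| = t (2W/π) cos u`. As `δ_Ω(F 0) ≤ t` and `x log (1/x)` increases on `(0, 1/e]`, the
hypothesis gives `|F' 0| ≤ (2/M) t log (1/t)`, i.e. `W (M cos u + u) ≤ -π m`. Since `M > 1` some
`u` has `M cos u + u > π/2`, and for `s = r^α` with `α` large this fails, because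
`W = (α - 1) log (1/r)` and `-m = (α + 1) log (1/r) / 2`.
-/

open Metric Set

/-- A set `E ⊆ ℂ` satisfies condition `(U)_{1,α}`. -/
def CondU1 (E : Set ℂ) (α : ℝ) : Prop :=
  ∃ C > (0 : ℝ), ∃ r₀ > (0 : ℝ), ∀ a ∈ E, ∀ r ∈ Set.Ioo (0 : ℝ) r₀,
    ({z : ℂ | C * r ^ α ≤ dist z a ∧ dist z a ≤ r} ∩ E).Nonempty

open Real

lemma monotoneOn_negMulLog : MonotoneOn negMulLog (Icc 0 (exp (-1))) := by
  refine monotoneOn_of_deriv_nonneg (convex_Icc _ _) continuous_negMulLog.continuousOn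
    (differentiableOn_negMulLog.mono fun x hx => ?_) fun x hx => ?_
  · rw [interior_Icc] at hx
    exact hx.1.ne'
  · rw [interior_Icc] at hx
    rw [deriv_negMulLog hx.1.ne']
    have : log x ≤ -1 := by rw [← log_exp (-1)]; exact log_le_log hx.1 hx.2.le
    linarith

lemma exists_abs_lt_pi_div_two_lt_mul_cos_add {M : ℝ} (hM : 1 < M) :
    ∃ u : ℝ, |u| < π / 2 ∧ π / 2 < M * cos u + u := by
  set v := min 1 ((M - 1) / M)
  have hv : 0 < v := lt_min one_pos (div_pos (by linarith) (by linarith))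
  have hv1 : v ≤ 1 := min_le_left _ _
  have hvM : M * v ≤ M - 1 := by
    have := min_le_right 1 ((M - 1) / M)
    rwa [le_div_iff₀ (by linarith), mul_comm] at this
  -- `sin v > v - v³/6` and `M v² ≤ M v ≤ M - 1` give `v < M sin v`
  have hsin : v < M * sin v := by
    nlinarith [sin_gt_sub_cube hv, mul_le_mul_of_nonneg_left hv1 hv.le]
  refine ⟨π / 2 - v, abs_lt.2 ⟨by linarith [pi_gt_three], by linarith⟩, ?_⟩
  rw [cos_pi_div_two_sub]
  linarith

lemma isPreconnected_closedAnnulus (a : ℂ) {s : ℝ} (hs : 0 ≤ s) (r : ℝ) :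
    IsPreconnected {z : ℂ | s ≤ dist z a ∧ dist z a ≤ r} := by
  have : {z : ℂ | s ≤ dist z a ∧ dist z a ≤ r} =
      (fun q : ℝ × ℝ => a + q.1 * Complex.exp (q.2 * Complex.I)) '' (Icc s r ×ˢ univ) := by
    ext z
    constructor
    · rintro ⟨h₁, h₂⟩
      refine ⟨(dist z a, Complex.arg (z - a)), ⟨⟨h₁, h₂⟩, trivial⟩, ?_⟩
      simp [Complex.dist_eq, Complex.norm_mul_exp_arg_mul_I]
    · rintro ⟨⟨ρ, φ⟩, ⟨⟨h₁, h₂⟩, -⟩, rfl⟩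
      have hρ : dist (a + ρ * Complex.exp (φ * Complex.I)) a = ρ := by
        simp [Complex.norm_exp_ofReal_mul_I, abs_of_nonneg (hs.trans h₁)]
      rw [mem_ofPred_eq, hρ]
      exact ⟨h₁, h₂⟩
  rw [this]
  exact (isPreconnected_Icc.prod isPreconnected_univ).image _ (by fun_prop)

lemma closedAnnulus_subset_of_disjoint_frontier {Ω : Set ℂ} (hopen : IsOpen Ω)
    (hconn : IsPreconnected Ω) {a : ℂ} (ha : a ∈ frontier Ω) {s r : ℝ} (hs : 0 < s)
    (hsr : s ≤ r) (hfar : ∃ z ∈ Ω, s < dist z a)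
    (hdisj : Disjoint {z : ℂ | s ≤ dist z a ∧ dist z a ≤ r} (frontier Ω)) :
    {z : ℂ | s ≤ dist z a ∧ dist z a ≤ r} ⊆ Ω := by
  obtain ⟨b, hbΩ, hab⟩ := Metric.mem_closure_iff.1 (frontier_subset_closure ha) s hs
  -- `Ω` joins a point inside the circle `|z - a| = s` to one outside, so it meets the circle
  have hcircle : ∃ z ∈ Ω, dist z a = s := by
    by_contra! h
    have := hconn.lt_of_ne (continuous_id.dist continuous_const).continuousOn h hfar hbΩ
    rw [dist_comm] at hab
    exact this.not_gt hab
  obtain ⟨z, hzΩ, hz⟩ := hcircle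
  refine (isPreconnected_closedAnnulus a hs.le r).subset_of_closure_inter_subset hopen
    ⟨z, ⟨hz.ge, hz.trans_le hsr⟩, hzΩ⟩ fun y ⟨hyc, hyA⟩ => ?_
  by_contra hyΩ
  refine hdisj.notMem_of_mem_left hyA ?_
  rw [hopen.frontier_eq]
  exact ⟨hyc, hyΩ⟩

lemma re_one_add_div_one_sub_pos {w : ℂ} (hw : ‖w‖ < 1) : 0 < ((1 + w) / (1 - w)).re := by
  have hw1 : (1 : ℂ) - w ≠ 0 := sub_ne_zero.2 fun h => by simp [← h] at hw
  rw [Complex.div_re, ← add_div]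
  refine div_pos ?_ (Complex.normSq_pos.2 hw1)
  have : w.re * w.re + w.im * w.im < 1 := by
    rw [← Complex.normSq_apply, ← Complex.sq_norm]
    nlinarith [norm_nonneg w]
  simp only [Complex.add_re, Complex.sub_re, Complex.one_re, Complex.add_im, Complex.sub_im,
    Complex.one_im]
  nlinarith

lemma dist_add_exp_sub_mul_I_log (a ζ : ℂ) (m c : ℝ) :
    dist (a + Complex.exp (m - c * Complex.I * Complex.log ζ)) a = exp (m + c * Complex.arg ζ) := by
  rw [dist_eq_norm, add_sub_cancel_left, Complex.norm_exp]
  simp [Complex.log_im]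

theorem exists_differentiableOn_ball_mapsTo_annulus (a : ℂ) (m : ℝ) {W u : ℝ} (hW : 0 < W)
    (hu : |u| < π / 2) :
    ∃ F : ℂ → ℂ, DifferentiableOn ℂ F (ball 0 1) ∧
      MapsTo F (ball 0 1) {z | exp (m - W / 2) < dist z a ∧ dist z a < exp (m + W / 2)} ∧
      dist (F 0) a = exp (m + W / π * u) ∧
      ‖deriv F 0‖ = dist (F 0) a * (2 * W / π * cos u) := by
  have hcos : 0 < cos u := cos_pos_of_mem_Ioo (abs_lt.1 hu)
  -- an affine image of the Cayley map: the unit disc onto the right half-plane, `0 ↦ e^{iu}`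
  set G : ℂ → ℂ := fun w => cos u * ((1 + w) / (1 - w)) + sin u * Complex.I
  have hG_re : ∀ w ∈ ball (0 : ℂ) 1, 0 < (G w).re := fun w hw => by
    simpa only [G, Complex.add_re, Complex.re_ofReal_mul, Complex.mul_I_re, Complex.ofReal_im,
      neg_zero, add_zero] using mul_pos hcos (re_one_add_div_one_sub_pos (mem_ball_zero_iff.1 hw))
  have hG_slit : ∀ w ∈ ball (0 : ℂ) 1, G w ∈ Complex.slitPlane := fun w hw =>
    Complex.mem_slitPlane_iff.2 (Or.inl (hG_re w hw))
  have hG_diff : ∀ w ∈ ball (0 : ℂ) 1, DifferentiableAt ℂ G w := fun w hw => by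
    have : (1 : ℂ) - w ≠ 0 := sub_ne_zero.2 fun h => by simp [← h] at hw
    fun_prop (disch := exact this)
  have hG_deriv : HasDerivAt G (2 * cos u) 0 := by
    refine ((((hasDerivAt_id (0 : ℂ)).const_add 1).div ((hasDerivAt_id (0 : ℂ)).const_sub 1)
      (by norm_num)).const_mul (cos u : ℂ)).add_const (sin u * Complex.I) |>.congr_deriv ?_
    norm_num
    ring
  have hG0_arg : Complex.arg (G 0) = u := by
    have := abs_lt.1 hu
    simpa [G] using Complex.arg_cos_add_sin_mul_I ⟨by linarith [pi_pos], by linarith [pi_pos]⟩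
  have hG0_norm : ‖G 0‖ = 1 := by
    simp [G, ← Complex.exp_mul_I, Complex.norm_exp_ofReal_mul_I]
  have hc : 0 < W / π := div_pos hW pi_pos
  set E : ℂ → ℂ := fun w => m - (W / π : ℝ) * Complex.I * Complex.log (G w)
  have hE_diff : ∀ w ∈ ball (0 : ℂ) 1, DifferentiableAt ℂ E w := fun w hw =>
    ((Complex.differentiableAt_log (hG_slit w hw)).comp w (hG_diff w hw)).const_mul _ |>.const_sub _
  have hE_deriv : HasDerivAt E (-((W / π : ℝ) * Complex.I * ((G 0)⁻¹ * (2 * cos u)))) 0 :=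
    (((Complex.hasDerivAt_log (hG_slit 0 (mem_ball_self one_pos))).comp 0 hG_deriv).const_mul
      _).const_sub _
  refine ⟨fun w => a + Complex.exp (E w),
    fun w hw => ((hE_diff w hw).cexp.const_add a).differentiableWithinAt, fun w hw => ?_, ?_, ?_⟩
  · have harg := abs_lt.1 (Complex.abs_arg_lt_pi_div_two_iff.2 (Or.inl (hG_re w hw)))
    dsimp only [E]
    rw [mem_ofPred_eq, dist_add_exp_sub_mul_I_log, exp_lt_exp, exp_lt_exp]
    have : W / π * (π / 2) = W / 2 := by field_simp
    constructor <;> nlinarith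
  · dsimp only [E]
    rw [dist_add_exp_sub_mul_I_log, hG0_arg]
  · rw [(hE_deriv.cexp.const_add a).deriv]
    simp only [E, dist_eq_norm, add_sub_cancel_left, norm_mul, norm_neg, norm_inv, hG0_norm,
      Complex.norm_I, Complex.norm_real, Complex.norm_ofNat, norm_eq_abs, abs_of_pos hc,
      abs_of_pos hcos]
    ring

theorem mul_cos_add_mul_log_sub_log_le_of_annulus_subset {Ω : Set ℂ} (hopen : IsOpen Ω)
    {M δ₀ : ℝ} (hM : 0 < M)
    (hρ : ∀ z ∈ Ω, infDist z (frontier Ω) < δ₀ →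
      ∀ f : ℂ → ℂ, DifferentiableOn ℂ f (ball (0 : ℂ) 1) →
        MapsTo f (ball (0 : ℂ) 1) Ω → f 0 = z →
          ‖deriv f 0‖ ≤
            (2 / M) * infDist z (frontier Ω) * log (1 / infDist z (frontier Ω)))
    {a : ℂ} (ha : a ∈ frontier Ω) {s r u : ℝ} (hs : 0 < s) (hsr : s < r) (hrδ₀ : r ≤ δ₀)
    (hre : r ≤ exp (-1)) (hu : |u| < π / 2)
    (hA : {z : ℂ | s < dist z a ∧ dist z a < r} ⊆ Ω) :
    (M * cos u + u) * (log r - log s) ≤ -(π / 2 * (log s + log r)) := by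
  set m := (log s + log r) / 2
  set W := log r - log s
  have hW : 0 < W := sub_pos.2 (log_lt_log hs hsr)
  obtain ⟨F, hF_diff, hF_maps, hF0, hF_deriv⟩ :=
    exists_differentiableOn_ball_mapsTo_annulus a m hW hu
  rw [show m - W / 2 = log s by ring, show m + W / 2 = log r by ring, exp_log hs,
    exp_log (hs.trans hsr)] at hF_maps
  set t := dist (F 0) a
  set δ := infDist (F 0) (frontier Ω)
  have htr : t < r := (hF_maps (mem_ball_self one_pos)).2
  have hFΩ : F 0 ∈ Ω := hA (hF_maps (mem_ball_self one_pos))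
  have hδ : 0 < δ := (isClosed_frontier.notMem_iff_infDist_pos ⟨a, ha⟩).1 fun h =>
    (hopen.frontier_eq ▸ h).2 hFΩ
  have hδt : δ ≤ t := infDist_le_dist_of_mem ha
  have hbound := hρ (F 0) hFΩ (by linarith) F hF_diff (fun w hw => hA (hF_maps hw)) rfl
  have hmono : δ * log (1 / δ) ≤ t * log (1 / t) := by
    simpa [negMulLog, log_inv] using
      monotoneOn_negMulLog ⟨hδ.le, by linarith⟩ ⟨hδ.le.trans hδt, by linarith⟩ hδt
  have hlog_t : log (1 / t) = -(m + W / π * u) := by rw [hF0, one_div, log_inv, log_exp]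
  have h : t * (2 * W / π * cos u) ≤ 2 / M * (t * -(m + W / π * u)) := by
    calc t * (2 * W / π * cos u) = ‖deriv F 0‖ := hF_deriv.symm
      _ ≤ 2 / M * δ * log (1 / δ) := hbound
      _ ≤ 2 / M * (t * -(m + W / π * u)) := by
        rw [mul_assoc, ← hlog_t]; gcongr
  have ht : 0 < t := hδ.trans_le hδt
  have key : M * W * cos u ≤ π * -(m + W / π * u) := by
    have h' : 2 * t / (M * π) * (M * W * cos u) ≤ 2 * t / (M * π) * (π * -(m + W / π * u)) := by
      convert h using 1 <;> field_simp
    exact le_of_mul_le_mul_left h' (by positivity)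
  rw [show π * -(m + W / π * u) = -(π / 2 * (log s + log r)) - W * u by field_simp; ring] at key
  linarith

theorem stmt_5 (Ω : Set ℂ) (hopen : IsOpen Ω) (hconn : IsConnected Ω)
    (hbd : (frontier Ω).Nonempty)
    (M δ₀ : ℝ) (hM : 1 < M) (hδ₀ : δ₀ ∈ Set.Ioo (0 : ℝ) 1)
    (hρ : ∀ z ∈ Ω, infDist z (frontier Ω) < δ₀ →
      ∀ f : ℂ → ℂ, DifferentiableOn ℂ f (ball (0 : ℂ) 1) →
        MapsTo f (ball (0 : ℂ) 1) Ω → f 0 = z →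
          ‖deriv f 0‖ ≤
            (2 / M) * infDist z (frontier Ω) * Real.log (1 / infDist z (frontier Ω))) :
    ∃ α > (1 : ℝ), CondU1 (frontier Ω) α := by
  obtain ⟨u, hu, hθ⟩ := exists_abs_lt_pi_div_two_lt_mul_cos_add hM
  set θ := M * cos u + u
  obtain ⟨z₀, hz₀⟩ := hconn.nonempty
  have hd₀ : 0 < infDist z₀ (frontier Ω) :=
    (isClosed_frontier.notMem_iff_infDist_pos hbd).1 fun h => (hopen.frontier_eq ▸ h).2 hz₀
  set α := 1 + 2 * π / (θ - π / 2)
  have hα : (α - 1) * (θ - π / 2) = 2 * π := by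
    have : θ - π / 2 ≠ 0 := by linarith
    simp only [α, add_sub_cancel_left, div_mul_cancel₀ _ this]
  have hα1 : 1 < α := lt_add_of_pos_right 1 (div_pos (by positivity) (by linarith))
  refine ⟨α, hα1, 1, one_pos, min (min δ₀ (exp (-1))) (infDist z₀ (frontier Ω)),
    lt_min (lt_min hδ₀.1 (exp_pos _)) hd₀, fun a ha r ⟨hr, hr₀⟩ => ?_⟩
  rw [one_mul, nonempty_iff_ne_empty]
  intro hempty
  simp only [lt_min_iff] at hr₀
  have hr1 : r < 1 := hr₀.1.2.trans (by simp)
  have hsr : r ^ α < r := rpow_lt_self_of_lt_one hr hr1 hα1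
  have hA := closedAnnulus_subset_of_disjoint_frontier hopen hconn.isPreconnected ha
    (rpow_pos_of_pos hr α) hsr.le ⟨z₀, hz₀, hsr.trans (hr₀.2.trans_le (infDist_le_dist_of_mem ha))⟩
    (disjoint_iff_inter_eq_empty.2 hempty)
  have key := mul_cos_add_mul_log_sub_log_le_of_annulus_subset hopen (by linarith) hρ ha
    (rpow_pos_of_pos hr α) hsr hr₀.1.1.le hr₀.1.2.le hu fun z hz => hA ⟨hz.1.le, hz.2.le⟩
  rw [log_rpow hr] at key
  have : 0 ≤ π * log r := by linear_combination key + log r * hα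
  exact this.not_gt (mul_neg_of_pos_of_neg pi_pos (log_neg hr hr1))
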